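/- arXiv:1211.6497 — 3 statements merged into one kernel-verified Lean document; each statement's English description precedes it below -/
import Mathlib

section
/- Let p, q > 0 with pq > 1, let c > 0, T > 0, and let A, B : [0,T) → ℝ be positive C¹ functions satisfying A'(t) ≥ c·B(t)^p/√(T−t) and B'(t) ≥ c·A(t)^q/√(T−t) for all t ∈ [0,T), and suppose A(t) → +∞ or B(t) → +∞ as t → T⁻. Then there exists C > 0 such that A(t) ≤ C(T−t)^{−α/2} and B(t) ≤ C(T−t)^{−β/2} for all t ∈ [0,T), where α = (p+1)/(pq−1) and β = (q+1)/(pq−1). -/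
open Real Set Filter
open scoped Topology

/-!
In the variable `√(T - t)` each of `A`, `B` grows at rate at least `2 c` times a power of the
other. Across a block of length `2 g` in that variable, `B` first gains `2 c g A ^ q`, and then
`A` gains `2 c g (2 c g A ^ q) ^ p`, so `A` at the end of the block is at least
`(2 c g) ^ (p + 1) A ^ (p q)`. Starting at `t` with `x = √(T - t)` and gaps `g = x / 8 / 2 ^ n`,
all blocks end before `T - (x / 2) ^ 2`, where the increasing function `A` is finite. Since
`p q > 1`, this recursion forces `A` to grow geometrically along the blocks unless
`(c x / 4) ^ (p + 1) A(t) ^ (p q - 1) < 2 ^ α`, which is the bound for `A`; the bound for `B`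
follows by exchanging the roles of `A` and `B`.
-/

theorem add_two_mul_sqrt_sub_le {f f' : ℝ → ℝ} {T a b κ : ℝ} (hab : a ≤ b) (hbT : b < T)
    (hf : ∀ s ∈ Icc a b, HasDerivWithinAt f (f' s) (Icc a b) s)
    (hf' : ∀ s ∈ Icc a b, κ / √(T - s) ≤ f' s) :
    f a + 2 * κ * (√(T - a) - √(T - b)) ≤ f b := by
  have hmono : MonotoneOn (fun s => f s + 2 * κ * √(T - s)) (Icc a b) := by
    refine monotoneOn_of_hasDerivWithinAt_nonneg (f' := fun s => f' s - κ / √(T - s))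
      (convex_Icc a b) (fun s hs => (hf s hs).continuousWithinAt.add (by fun_prop)) ?_ ?_
    · rw [interior_Icc]
      intro s hs
      have hsT : 0 < T - s := by linarith [hs.2]
      have hsqrt := (((hasDerivAt_id s).const_sub T).sqrt hsT.ne').const_mul (2 * κ)
      refine (((hf s (Ioo_subset_Icc_self hs)).mono Ioo_subset_Icc_self).add
        hsqrt.hasDerivWithinAt).congr_deriv ?_
      simp only [id]
      field_simp
      ring
    · rw [interior_Icc]
      exact fun s hs => sub_nonneg.2 (hf' s (Ioo_subset_Icc_self hs))
  have := hmono (left_mem_Icc.2 hab) (right_mem_Icc.2 hab) hab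
  simp only at this
  linarith

theorem pow_mul_le_of_rpow_growth {u : ℕ → ℝ} {K r ρ : ℝ} (hρ : 0 < ρ) (hr : 1 ≤ r)
    (hu : ∀ n, 0 < u n) (h0 : ρ ≤ K * u 0 ^ (r - 1))
    (hstep : ∀ n, K * u n ^ r ≤ (ρ ^ (r - 1)) ^ n * u (n + 1)) (n : ℕ) :
    ρ ^ n * u 0 ≤ u n := by
  have hK : 0 ≤ K := by
    by_contra! hK
    linarith [mul_neg_of_neg_of_pos hK (rpow_pos_of_pos (hu 0) (r - 1))]
  induction n with
  | zero => simp
  | succ n ih =>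
    have hσ : 0 < (ρ ^ (r - 1)) ^ n := by positivity
    have hpow : (ρ ^ (r - 1)) ^ n * u 0 ^ (r - 1) ≤ u n ^ (r - 1) := by
      rw [← rpow_mul_natCast hρ.le, mul_comm (r - 1), rpow_natCast_mul hρ.le,
        ← mul_rpow (pow_pos hρ n).le (hu 0).le]
      exact rpow_le_rpow (mul_pos (pow_pos hρ n) (hu 0)).le ih (by linarith)
    have hgrowth : (ρ ^ (r - 1)) ^ n * (ρ * u n) ≤ (ρ ^ (r - 1)) ^ n * u (n + 1) :=
      calc (ρ ^ (r - 1)) ^ n * (ρ * u n)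
          ≤ (ρ ^ (r - 1)) ^ n * (K * u 0 ^ (r - 1) * u n) := by gcongr; exact (hu n).le
        _ = K * ((ρ ^ (r - 1)) ^ n * u 0 ^ (r - 1)) * u n := by ring
        _ ≤ K * u n ^ (r - 1) * u n := by gcongr; exact (hu n).le
        _ = K * u n ^ r := by rw [mul_assoc, ← rpow_add_one (hu n).ne', sub_add_cancel]
        _ ≤ (ρ ^ (r - 1)) ^ n * u (n + 1) := hstep n
    calc ρ ^ (n + 1) * u 0 = ρ * (ρ ^ n * u 0) := by ring
      _ ≤ ρ * u n := by gcongr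
      _ ≤ u (n + 1) := le_of_mul_le_mul_left hgrowth hσ

theorem mul_rpow_lt_of_rpow_growth {u : ℕ → ℝ} {K r ρ : ℝ} (hρ : 1 < ρ) (hr : 1 ≤ r)
    (hu : ∀ n, 0 < u n) (hbdd : BddAbove (range u))
    (hstep : ∀ n, K * u n ^ r ≤ (ρ ^ (r - 1)) ^ n * u (n + 1)) :
    K * u 0 ^ (r - 1) < ρ := by
  by_contra! h0
  obtain ⟨M, hM⟩ := hbdd
  obtain ⟨n, hn⟩ := pow_unbounded_of_one_lt (M / u 0) hρ
  rw [div_lt_iff₀ (hu 0)] at hn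
  linarith [pow_mul_le_of_rpow_growth (by linarith) hr hu h0 hstep n, hM (mem_range_self n)]

noncomputable def dyadicRadius (x : ℝ) (n : ℕ) : ℝ := x / 2 * (1 + (2 ^ n)⁻¹)

theorem dyadicRadius_zero (x : ℝ) : dyadicRadius x 0 = x := by
  simp only [dyadicRadius]; norm_num

theorem half_le_dyadicRadius (x : ℝ) (hx : 0 ≤ x) (n : ℕ) : x / 2 ≤ dyadicRadius x n :=
  le_mul_of_one_le_right (by positivity) (by simp)

theorem dyadicRadius_le (x : ℝ) (hx : 0 ≤ x) (n : ℕ) : dyadicRadius x n ≤ x := by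
  have : ((2 : ℝ) ^ n)⁻¹ ≤ 1 := inv_le_one_of_one_le₀ (one_le_pow₀ one_le_two)
  simp only [dyadicRadius]; nlinarith

theorem dyadicRadius_sub_two_mul (x : ℝ) (n : ℕ) :
    dyadicRadius x n - 2 * (x / 8 / 2 ^ n) = dyadicRadius x (n + 1) := by
  simp only [dyadicRadius, pow_succ]; field_simp; ring

structure IsSupersolution (p q c T : ℝ) (A B A' B' : ℝ → ℝ) : Prop where
  pos_left : ∀ t ∈ Ico (0 : ℝ) T, 0 < A t
  pos_right : ∀ t ∈ Ico (0 : ℝ) T, 0 < B t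
  hasDerivWithinAt_left : ∀ t ∈ Ico (0 : ℝ) T, HasDerivWithinAt A (A' t) (Ico 0 T) t
  hasDerivWithinAt_right : ∀ t ∈ Ico (0 : ℝ) T, HasDerivWithinAt B (B' t) (Ico 0 T) t
  le_deriv_left : ∀ t ∈ Ico (0 : ℝ) T, c * B t ^ p / √(T - t) ≤ A' t
  le_deriv_right : ∀ t ∈ Ico (0 : ℝ) T, c * A t ^ q / √(T - t) ≤ B' t

namespace IsSupersolution

variable {p q c T : ℝ} {A B A' B' : ℝ → ℝ}

theorem swap (h : IsSupersolution p q c T A B A' B') : IsSupersolution q p c T B A B' A' :=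
  ⟨h.pos_right, h.pos_left, h.hasDerivWithinAt_right, h.hasDerivWithinAt_left,
    h.le_deriv_right, h.le_deriv_left⟩

theorem add_two_mul_sqrt_sub_le_left (h : IsSupersolution p q c T A B A' B') {a b κ : ℝ}
    (ha : 0 ≤ a) (hab : a ≤ b) (hbT : b < T) (hκ : ∀ s ∈ Icc a b, κ ≤ c * B s ^ p) :
    A a + 2 * κ * (√(T - a) - √(T - b)) ≤ A b := by
  have hsub : Icc a b ⊆ Ico 0 T := Icc_subset_Ico ha hbT
  refine add_two_mul_sqrt_sub_le hab hbT
    (fun s hs => (h.hasDerivWithinAt_left s (hsub hs)).mono hsub) fun s hs => ?_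
  exact (div_le_div_of_nonneg_right (hκ s hs) (sqrt_nonneg _)).trans
    (h.le_deriv_left s (hsub hs))

theorem monotoneOn_left (h : IsSupersolution p q c T A B A' B') (hc : 0 ≤ c) :
    MonotoneOn A (Ico 0 T) := fun a ha b hb hab => by
  simpa using h.add_two_mul_sqrt_sub_le_left ha.1 hab hb.2 fun s hs =>
    mul_nonneg hc (rpow_nonneg (h.pos_right s (Icc_subset_Ico ha.1 hb.2 hs)).le p)

theorem two_mul_sqrt_sub_le_right (h : IsSupersolution p q c T A B A' B') (hc : 0 ≤ c)
    (hq : 0 ≤ q) {a b : ℝ} (ha : 0 ≤ a) (hab : a ≤ b) (hbT : b < T) :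
    2 * (c * A a ^ q) * (√(T - a) - √(T - b)) ≤ B b := by
  have hsub : Icc a b ⊆ Ico 0 T := Icc_subset_Ico ha hbT
  have hAa := h.pos_left a (hsub (left_mem_Icc.2 hab))
  have key := h.swap.add_two_mul_sqrt_sub_le_left ha hab hbT fun s hs =>
    mul_le_mul_of_nonneg_left (rpow_le_rpow hAa.le
      (h.monotoneOn_left hc (hsub (left_mem_Icc.2 hab)) (hsub hs) hs.1) hq) hc
  linarith [h.pos_right a (hsub (left_mem_Icc.2 hab))]

theorem two_mul_rpow_mul_le_left (h : IsSupersolution p q c T A B A' B') (hc : 0 ≤ c)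
    (hp : 0 ≤ p) (hq : 0 ≤ q) {a m b : ℝ} (ha : 0 ≤ a) (ham : a ≤ m) (hmb : m ≤ b)
    (hbT : b < T) :
    2 * (c * (2 * (c * A a ^ q) * (√(T - a) - √(T - m))) ^ p) * (√(T - m) - √(T - b))
      ≤ A b := by
  have hsqrt_am : √(T - m) ≤ √(T - a) := sqrt_le_sqrt (by linarith)
  have hAa := h.pos_left a ⟨ha, by linarith⟩
  have key := h.add_two_mul_sqrt_sub_le_left (ha.trans ham) hmb hbT
      (κ := c * (2 * (c * A a ^ q) * (√(T - a) - √(T - m))) ^ p) fun s hs => by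
    have hsqrt_ms : √(T - s) ≤ √(T - m) := sqrt_le_sqrt (by linarith [hs.1])
    refine mul_le_mul_of_nonneg_left (rpow_le_rpow (by positivity) ?_ hp) hc
    refine le_trans ?_
      (h.two_mul_sqrt_sub_le_right hc hq ha (ham.trans hs.1) (hs.2.trans_lt hbT))
    gcongr
  linarith [h.pos_left m ⟨ha.trans ham, hmb.trans_lt hbT⟩]

theorem rpow_mul_rpow_le_left (h : IsSupersolution p q c T A B A' B') (hc : 0 < c)
    (hp : 0 < p) (hq : 0 ≤ q) {y g : ℝ} (hg : 0 < g) (hgy : 2 * g < y) (hyT : y ^ 2 ≤ T) :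
    (2 * c * g) ^ (p + 1) * A (T - y ^ 2) ^ (p * q) ≤ A (T - (y - 2 * g) ^ 2) := by
  have hsqrt (z : ℝ) (hz : 0 ≤ z) : √(T - (T - z ^ 2)) = z := by
    rw [sub_sub_cancel, sqrt_sq hz]
  have hy : 0 < y - 2 * g := by linarith
  have hmem : T - y ^ 2 ∈ Ico 0 T := ⟨by linarith, by nlinarith⟩
  have key := h.two_mul_rpow_mul_le_left hc.le hp.le hq (a := T - y ^ 2)
    (m := T - (y - g) ^ 2) (b := T - (y - 2 * g) ^ 2) hmem.1 (by nlinarith) (by nlinarith)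
    (by nlinarith)
  rw [hsqrt y (by linarith), hsqrt (y - g) (by linarith), hsqrt (y - 2 * g) (by linarith),
    sub_sub_cancel, show 2 * (c * A (T - y ^ 2) ^ q) * g = 2 * c * g * A (T - y ^ 2) ^ q by ring,
    mul_rpow (by positivity) (rpow_nonneg (h.pos_left _ hmem).le _),
    ← rpow_mul (h.pos_left _ hmem).le] at key
  rw [rpow_add_one (by positivity), mul_comm p q]
  linarith

theorem rpow_mul_rpow_dyadicRadius_le (h : IsSupersolution p q c T A B A' B') (hc : 0 < c)
    (hp : 0 < p) (hq : 0 ≤ q) (hpq : 1 < p * q) {x : ℝ} (hx : 0 < x) (hxT : x ^ 2 ≤ T)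
    (n : ℕ) :
    (c * x / 4) ^ (p + 1) * A (T - dyadicRadius x n ^ 2) ^ (p * q)
      ≤ ((2 ^ ((p + 1) / (p * q - 1)) : ℝ) ^ (p * q - 1)) ^ n
        * A (T - dyadicRadius x (n + 1) ^ 2) := by
  have hg : 0 < x / 8 / 2 ^ n := by positivity
  have hg_le : x / 8 / 2 ^ n ≤ x / 8 := div_le_self (by positivity) (one_le_pow₀ one_le_two)
  have step := h.rpow_mul_rpow_le_left hc hp hq hg (by linarith [half_le_dyadicRadius x hx.le n])
    ((pow_le_pow_left₀ (by linarith [half_le_dyadicRadius x hx.le n])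
      (dyadicRadius_le x hx.le n) 2).trans hxT)
  rw [dyadicRadius_sub_two_mul] at step
  have hratio : (2 ^ ((p + 1) / (p * q - 1)) : ℝ) ^ (p * q - 1) = 2 ^ (p + 1) := by
    rw [← rpow_mul zero_le_two, div_mul_cancel₀ _ (by linarith)]
  have hscale :
      (c * x / 4) ^ (p + 1) = (2 ^ n) ^ (p + 1) * (2 * c * (x / 8 / 2 ^ n)) ^ (p + 1) := by
    rw [← mul_rpow (by positivity) (by positivity)]
    congr 1
    field_simp
    ring
  rw [hratio, ← rpow_mul_natCast zero_le_two, mul_comm (p + 1), rpow_natCast_mul zero_le_two,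
    hscale, mul_assoc]
  exact mul_le_mul_of_nonneg_left step (by positivity)

theorem rpow_mul_rpow_lt_left (h : IsSupersolution p q c T A B A' B') (hc : 0 < c)
    (hp : 0 < p) (hq : 0 < q) (hpq : 1 < p * q) {t : ℝ} (ht : t ∈ Ico 0 T) :
    (c * √(T - t) / 4) ^ (p + 1) * A t ^ (p * q - 1) < 2 ^ ((p + 1) / (p * q - 1)) := by
  set x := √(T - t)
  have hx : 0 < x := sqrt_pos.2 (by linarith [ht.2])
  have hx2 : x ^ 2 = T - t := sq_sqrt (by linarith [ht.2])
  have hmem {z : ℝ} (hz : 0 < z) (hzx : z ≤ x) : T - z ^ 2 ∈ Ico 0 T :=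
    ⟨by nlinarith [ht.1], by nlinarith⟩
  have hy_mem (n : ℕ) : T - dyadicRadius x n ^ 2 ∈ Ico 0 T :=
    hmem (by linarith [half_le_dyadicRadius x hx.le n]) (dyadicRadius_le x hx.le n)
  have hbdd : BddAbove (range fun n => A (T - dyadicRadius x n ^ 2)) :=
    ⟨A (T - (x / 2) ^ 2), forall_mem_range.2 fun n => h.monotoneOn_left hc.le (hy_mem n)
      (hmem (by positivity) (by linarith)) (by nlinarith [half_le_dyadicRadius x hx.le n])⟩
  have key := mul_rpow_lt_of_rpow_growth (one_lt_rpow one_lt_two (div_pos (by linarith)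
    (by linarith))) hpq.le (fun n => h.pos_left _ (hy_mem n)) hbdd
    (h.rpow_mul_rpow_dyadicRadius_le hc hp hq.le hpq hx (by linarith [ht.1]))
  rwa [dyadicRadius_zero, hx2, sub_sub_cancel] at key

theorem exists_le_mul_rpow_left (h : IsSupersolution p q c T A B A' B') (hc : 0 < c)
    (hp : 0 < p) (hq : 0 < q) (hpq : 1 < p * q) :
    ∃ C > 0, ∀ t ∈ Ico (0 : ℝ) T, A t ≤ C * (T - t) ^ (-((p + 1) / (p * q - 1)) / 2) := by
  have hr : 0 < p * q - 1 := by linarith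
  set α := (p + 1) / (p * q - 1)
  refine ⟨(2 ^ α / (c / 4) ^ (p + 1)) ^ (p * q - 1)⁻¹, by positivity, fun t ht => ?_⟩
  have hz : 0 < T - t := by linarith [ht.2]
  have hAt := h.pos_left t ht
  have key := h.rpow_mul_rpow_lt_left hc hp hq hpq ht
  rw [mul_div_right_comm, mul_rpow (by positivity) (sqrt_nonneg _), sqrt_eq_rpow,
    ← rpow_mul hz.le] at key
  have hweighted : (A t * (T - t) ^ (α / 2)) ^ (p * q - 1)
      = A t ^ (p * q - 1) * (T - t) ^ (1 / 2 * (p + 1)) := by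
    rw [mul_rpow hAt.le (by positivity), ← rpow_mul hz.le]
    congr 2
    simp only [α]
    field_simp
  have hlt : A t * (T - t) ^ (α / 2) < (2 ^ α / (c / 4) ^ (p + 1)) ^ (p * q - 1)⁻¹ := by
    rw [lt_rpow_inv_iff_of_pos (by positivity) (by positivity) hr, hweighted,
      lt_div_iff₀ (by positivity)]
    linarith
  calc A t = A t * (T - t) ^ (α / 2) * (T - t) ^ (-α / 2) := by
        rw [mul_assoc, ← rpow_add hz, neg_div, add_neg_cancel, rpow_zero, mul_one]
    _ ≤ _ := by gcongr

end IsSupersolution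

theorem blowup_rate_ode_lemma_general
    (p q c T : ℝ) (hp : 0 < p) (hq : 0 < q) (hpq : 1 < p * q) (hc : 0 < c)
    (A B A' B' : ℝ → ℝ)
    (hApos : ∀ t ∈ Ico (0 : ℝ) T, 0 < A t)
    (hBpos : ∀ t ∈ Ico (0 : ℝ) T, 0 < B t)
    (hA : ∀ t ∈ Ico (0 : ℝ) T, HasDerivWithinAt A (A' t) (Ico 0 T) t)
    (hB : ∀ t ∈ Ico (0 : ℝ) T, HasDerivWithinAt B (B' t) (Ico 0 T) t)
    (hAineq : ∀ t ∈ Ico (0 : ℝ) T, c * B t ^ p / Real.sqrt (T - t) ≤ A' t)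
    (hBineq : ∀ t ∈ Ico (0 : ℝ) T, c * A t ^ q / Real.sqrt (T - t) ≤ B' t) :
    ∃ C > 0, ∀ t ∈ Ico (0 : ℝ) T,
      A t ≤ C * (T - t) ^ (-((p + 1) / (p * q - 1)) / 2) ∧
      B t ≤ C * (T - t) ^ (-((q + 1) / (p * q - 1)) / 2) := by
  have h : IsSupersolution p q c T A B A' B' := ⟨hApos, hBpos, hA, hB, hAineq, hBineq⟩
  obtain ⟨C₁, hC₁, hA_le⟩ := h.exists_le_mul_rpow_left hc hp hq hpq
  obtain ⟨C₂, -, hB_le⟩ := h.swap.exists_le_mul_rpow_left hc hq hp (by rwa [mul_comm])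
  refine ⟨max C₁ C₂, lt_max_of_lt_left hC₁, fun t ht => ⟨?_, ?_⟩⟩
  · exact (hA_le t ht).trans <|
      mul_le_mul_of_nonneg_right (le_max_left _ _) (rpow_nonneg (sub_nonneg.2 ht.2.le) _)
  · rw [mul_comm q p] at hB_le
    exact (hB_le t ht).trans <|
      mul_le_mul_of_nonneg_right (le_max_right _ _) (rpow_nonneg (sub_nonneg.2 ht.2.le) _)

/-- If `A, B` are positive `C¹` functions on `[0,T)` satisfying
`A'(t) ≥ c B(t)^p / √(T-t)` and `B'(t) ≥ c A(t)^q / √(T-t)`, with `p, q > 0`, `pq > 1`,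
`c > 0`, and at least one of `A, B` blows up as `t → T⁻`, then there is `C > 0` with
`A(t) ≤ C (T-t)^{-α/2}` and `B(t) ≤ C (T-t)^{-β/2}` on `[0,T)`, where
`α = (p+1)/(pq-1)` and `β = (q+1)/(pq-1)`. -/
theorem blowup_rate_ode_lemma
    (p q c T : ℝ) (hp : 0 < p) (hq : 0 < q) (hpq : 1 < p * q) (hc : 0 < c) (hT : 0 < T)
    (A B A' B' : ℝ → ℝ)
    (hApos : ∀ t ∈ Ico (0 : ℝ) T, 0 < A t)
    (hBpos : ∀ t ∈ Ico (0 : ℝ) T, 0 < B t)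
    (hA : ∀ t ∈ Ico (0 : ℝ) T, HasDerivWithinAt A (A' t) (Ico 0 T) t)
    (hB : ∀ t ∈ Ico (0 : ℝ) T, HasDerivWithinAt B (B' t) (Ico 0 T) t)
    (hA' : ContinuousOn A' (Ico 0 T))
    (hB' : ContinuousOn B' (Ico 0 T))
    (hAineq : ∀ t ∈ Ico (0 : ℝ) T, c * B t ^ p / Real.sqrt (T - t) ≤ A' t)
    (hBineq : ∀ t ∈ Ico (0 : ℝ) T, c * A t ^ q / Real.sqrt (T - t) ≤ B' t)
    (hblow : Tendsto A (nhdsWithin T (Ico 0 T)) atTop ∨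
      Tendsto B (nhdsWithin T (Ico 0 T)) atTop) :
    ∃ C > 0, ∀ t ∈ Ico (0 : ℝ) T,
      A t ≤ C * (T - t) ^ (-((p + 1) / (p * q - 1)) / 2) ∧
      B t ≤ C * (T - t) ^ (-((q + 1) / (p * q - 1)) / 2) :=
  blowup_rate_ode_lemma_general p q c T hp hq hpq hc A B A' B' hApos hBpos hA hB hAineq hBineq
end

section
/- Let w be a continuous function on \overline{B}_R × [0,T) satisfying the heat equation w_t = Δw in B_R × (0,T) and the boundary growth bound w(x,t) ≤ C(T−t)^{−m} for all (x,t) ∈ S_R × (0,T), where C > 0 and m > 0. Then for every 0 < a < R, sup{ w(x,t) : |x| ≤ a, 0 ≤ t < T } < ∞; in fact this supremum is at most C₁(R²−a²)^{−2m} for some constant C₁ > 0 depending on C, m, n, R, T and w(·,0). -/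
open MeasureTheory Metric Real Set Filter
open scoped Topology

noncomputable section

def lap (n : ℕ) (f : EuclideanSpace ℝ (Fin n) → ℝ) (x : EuclideanSpace ℝ (Fin n)) : ℝ :=
  ∑ i : Fin n,
    fderiv ℝ (fun y => fderiv ℝ f y (EuclideanSpace.single i 1)) x (EuclideanSpace.single i 1)

/-!
Comparison with the barrier `v(x,t) = A ((R² - |x|²)² + β (T - t))^{-m}`. Once
`β > (16(m+1) + 4n) R²`, `v` is a strict supersolution, `Δv < ∂ₜv`, on the ball. On the sphere
`v = A β^{-m} (T-t)^{-m}`, and at `t = 0` we have `v ≥ A (R⁴ + βT)^{-m}`, so for `A` large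
`v` lies above `w` on the parabolic boundary. At a first positive maximum of `w - v` one would
have `Δ(w - v) ≤ 0 ≤ ∂ₜ(w - v)`, contradicting strictness; hence `w ≤ v`, and on `|x| ≤ a` the
barrier is at most `A (R² - a²)^{-2m}`.
-/

theorem IsLocalMax.nonpos_of_hasDerivAt_of_hasDerivAt {g g' : ℝ → ℝ} {x a : ℝ}
    (hmax : IsLocalMax g x) (hg : ∀ᶠ s in 𝓝 x, HasDerivAt g (g' s) s)
    (hg' : HasDerivAt g' a x) : a ≤ 0 := by
  by_contra! ha
  have hg'x : g' x = 0 := hmax.hasDerivAt_eq_zero hg.self_of_nhds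
  have hderiv : deriv g =ᶠ[𝓝 x] g' := hg.mono fun s hs => hs.deriv
  -- `g` is then also a local minimum, hence locally constant, which forces `a = 0`.
  have hmin : IsLocalMin g x :=
    isLocalMin_of_deriv_deriv_pos (by rwa [hderiv.deriv_eq, hg'.deriv])
      (by rw [hderiv.self_of_nhds, hg'x]) hg.self_of_nhds.continuousAt
  have hconst : ∀ᶠ s in 𝓝 x, g s = g x := (hmax.and hmin).mono fun s hs => le_antisymm hs.1 hs.2
  have hzero : g' =ᶠ[𝓝 x] fun _ => 0 := by
    filter_upwards [hg, hconst.eventually_nhds] with s hs hs'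
    exact hs.unique ((hasDerivAt_const s (g x)).congr_of_eventuallyEq hs')
  exact ha.ne' (hg'.unique ((hasDerivAt_const x 0).congr_of_eventuallyEq hzero))

theorem HasDerivAt.nonneg_of_eventually_le_nhdsLT {f : ℝ → ℝ} {f' x : ℝ} (hf : HasDerivAt f f' x)
    (hmax : ∀ᶠ y in 𝓝[<] x, f y ≤ f x) : 0 ≤ f' := by
  refine ge_of_tendsto ((hasDerivWithinAt_iff_tendsto_slope' (s := Iio x) (lt_irrefl x)).1
    hf.hasDerivWithinAt) ?_
  filter_upwards [hmax, self_mem_nhdsWithin] with y hy (hyx : y < x)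
  rw [slope_def_field]
  exact div_nonneg_of_nonpos (by linarith) (by linarith)

section SecondDerivative

variable {E : Type*} [NormedAddCommGroup E] [NormedSpace ℝ E] {f g : E → ℝ} {U : Set E} {x : E}

theorem ContDiffOn.differentiableAt_fderiv_apply (hf : ContDiffOn ℝ 2 f U) (hU : IsOpen U)
    (hx : x ∈ U) (e : E) : DifferentiableAt ℝ (fun y => fderiv ℝ f y e) x :=
  (((hf.fderiv_of_isOpen (m := 1) hU (by norm_num)).differentiableOn (by norm_num)).differentiableAt
    (hU.mem_nhds hx)).clm_apply (differentiableAt_const e)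

theorem IsLocalMax.fderiv_fderiv_apply_nonpos (hmax : IsLocalMax f x) (hf : ContDiffOn ℝ 2 f U)
    (hU : IsOpen U) (hx : x ∈ U) (e : E) : fderiv ℝ (fun y => fderiv ℝ f y e) x e ≤ 0 := by
  have hline : ∀ s : ℝ, HasDerivAt (fun s : ℝ => x + s • e) e s := fun s => by
    simpa using ((hasDerivAt_id s).smul_const e).const_add x
  have hline_U : ∀ᶠ s in 𝓝 (0 : ℝ), x + s • e ∈ U :=
    (hline 0).continuousAt.preimage_mem_nhds (by simpa using hU.mem_nhds hx)
  refine IsLocalMax.nonpos_of_hasDerivAt_of_hasDerivAt (g := fun s : ℝ => f (x + s • e))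
    (g' := fun s => fderiv ℝ f (x + s • e) e) (x := 0) ?_ ?_ ?_
  · exact IsLocalMax.comp_continuous (g := fun s : ℝ => x + s • e) (by simpa)
      (hline 0).continuousAt
  · filter_upwards [hline_U] with s hs
    exact ((hf.differentiableOn (by norm_num)).differentiableAt
      (hU.mem_nhds hs)).hasFDerivAt.comp_hasDerivAt s (hline s)
  · exact (hf.differentiableAt_fderiv_apply hU hx e).hasFDerivAt.comp_hasDerivAt_of_eq (0 : ℝ)
      (hline 0) (by simp)

theorem fderiv_fderiv_apply_sub (hf : ContDiffOn ℝ 2 f U) (hg : ContDiffOn ℝ 2 g U) (hU : IsOpen U)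
    (hx : x ∈ U) (e : E) :
    fderiv ℝ (fun y => fderiv ℝ (f - g) y e) x e
      = fderiv ℝ (fun y => fderiv ℝ f y e) x e - fderiv ℝ (fun y => fderiv ℝ g y e) x e := by
  have hfg : (fun y => fderiv ℝ (f - g) y e) =ᶠ[𝓝 x]
      fun y => fderiv ℝ f y e - fderiv ℝ g y e := by
    filter_upwards [hU.mem_nhds hx] with y hy
    rw [fderiv_sub ((hf.differentiableOn (by norm_num)).differentiableAt (hU.mem_nhds hy))
      ((hg.differentiableOn (by norm_num)).differentiableAt (hU.mem_nhds hy))]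
    rfl
  rw [hfg.fderiv_eq, fderiv_fun_sub (hf.differentiableAt_fderiv_apply hU hx e)
    (hg.differentiableAt_fderiv_apply hU hx e)]
  rfl

end SecondDerivative

section Laplacian

variable {n : ℕ} {f g : EuclideanSpace ℝ (Fin n) → ℝ} {U : Set (EuclideanSpace ℝ (Fin n))}
  {x : EuclideanSpace ℝ (Fin n)}

theorem IsLocalMax.lap_nonpos (hmax : IsLocalMax f x) (hf : ContDiffOn ℝ 2 f U) (hU : IsOpen U)
    (hx : x ∈ U) : lap n f x ≤ 0 :=
  Finset.sum_nonpos fun _ _ => hmax.fderiv_fderiv_apply_nonpos hf hU hx _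

theorem lap_sub (hf : ContDiffOn ℝ 2 f U) (hg : ContDiffOn ℝ 2 g U) (hU : IsOpen U) (hx : x ∈ U) :
    lap n (f - g) x = lap n f x - lap n g x := by
  simp only [lap, ← Finset.sum_sub_distrib, fderiv_fderiv_apply_sub hf hg hU hx]

theorem lap_comp_norm_sq {φ φ' : ℝ → ℝ} {φ'' : ℝ} (hφ : ∀ r, HasDerivAt φ (φ' r) r)
    (hφ' : HasDerivAt φ' φ'' (‖x‖ ^ 2)) :
    lap n (fun y => φ (‖y‖ ^ 2)) x = 4 * ‖x‖ ^ 2 * φ'' + 2 * n * φ' (‖x‖ ^ 2) := by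
  have hfirst : ∀ e, (fun y => fderiv ℝ (fun y : EuclideanSpace ℝ (Fin n) => φ (‖y‖ ^ 2)) y e)
      = fun y => φ' (‖y‖ ^ 2) * (2 * inner ℝ y e) := by
    intro e
    funext y
    rw [HasFDerivAt.fderiv (f := fun y => φ (‖y‖ ^ 2))
      ((hφ _).comp_hasFDerivAt y (hasStrictFDerivAt_norm_sq y).hasFDerivAt)]
    simp
  have hsecond : ∀ e, fderiv ℝ (fun y => φ' (‖y‖ ^ 2) * (2 * inner ℝ y e)) x e
      = φ'' * (2 * inner ℝ x e) ^ 2 + φ' (‖x‖ ^ 2) * (2 * ‖e‖ ^ 2) := by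
    intro e
    rw [HasFDerivAt.fderiv (f := fun y => φ' (‖y‖ ^ 2) * (2 * inner ℝ y e))
      ((hφ'.comp_hasFDerivAt x (hasStrictFDerivAt_norm_sq x).hasFDerivAt).mul
        (((hasFDerivAt_id x).inner ℝ (hasFDerivAt_const e x)).const_mul 2))]
    simp only [Function.comp_apply, add_apply, smul_apply, ContinuousLinearMap.comp_apply,
      ContinuousLinearMap.prod_apply, ContinuousLinearMap.id_apply, zero_apply,
      fderivInnerCLM_apply, inner_zero_right, inner_self_eq_norm_sq_to_K, Real.ringHom_apply,
      zero_add, smul_eq_mul, innerSL_apply_apply, nsmul_eq_mul, Nat.cast_ofNat]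
    ring
  have hcoord : ∀ i : Fin n, fderiv ℝ (fun y => fderiv ℝ (fun y => φ (‖y‖ ^ 2)) y
      (EuclideanSpace.single i 1)) x (EuclideanSpace.single i 1)
        = 4 * φ'' * x i ^ 2 + 2 * φ' (‖x‖ ^ 2) := by
    intro i
    rw [hfirst, hsecond]
    simp only [EuclideanSpace.inner_single_right, Real.ringHom_apply, one_mul, PiLp.norm_single,
      norm_one, one_pow, mul_one]
    ring
  rw [lap, Finset.sum_congr rfl fun i _ => hcoord i, Finset.sum_add_distrib, ← Finset.mul_sum,
    ← EuclideanSpace.real_norm_sq_eq]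
  simp only [Finset.sum_const, Finset.card_univ, Fintype.card_fin, nsmul_eq_mul]
  ring

end Laplacian

theorem heat_comparison_of_strictSupersolution {n : ℕ} {R T : ℝ}
    {w v : EuclideanSpace ℝ (Fin n) → ℝ → ℝ}
    (hw_cont : ContinuousOn (fun z : EuclideanSpace ℝ (Fin n) × ℝ => w z.1 z.2)
      (closedBall 0 R ×ˢ Ico 0 T))
    (hv_cont : ContinuousOn (fun z : EuclideanSpace ℝ (Fin n) × ℝ => v z.1 z.2)
      (closedBall 0 R ×ˢ Ico 0 T))
    (hw_x : ∀ t ∈ Ioo (0 : ℝ) T, ContDiffOn ℝ 2 (fun x => w x t) (ball 0 R))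
    (hv_x : ∀ t ∈ Ioo (0 : ℝ) T, ContDiffOn ℝ 2 (fun x => v x t) (ball 0 R))
    (hw_t : ∀ x ∈ ball (0 : EuclideanSpace ℝ (Fin n)) R, ∀ t ∈ Ioo (0 : ℝ) T,
      DifferentiableAt ℝ (w x) t)
    (hv_t : ∀ x ∈ ball (0 : EuclideanSpace ℝ (Fin n)) R, ∀ t ∈ Ioo (0 : ℝ) T,
      DifferentiableAt ℝ (v x) t)
    (hw_sub : ∀ x ∈ ball (0 : EuclideanSpace ℝ (Fin n)) R, ∀ t ∈ Ioo (0 : ℝ) T,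
      deriv (w x) t ≤ lap n (fun y => w y t) x)
    (hv_super : ∀ x ∈ ball (0 : EuclideanSpace ℝ (Fin n)) R, ∀ t ∈ Ioo (0 : ℝ) T,
      lap n (fun y => v y t) x < deriv (v x) t)
    (h_init : ∀ x ∈ closedBall (0 : EuclideanSpace ℝ (Fin n)) R, w x 0 ≤ v x 0)
    (h_bdry : ∀ x ∈ sphere (0 : EuclideanSpace ℝ (Fin n)) R, ∀ t ∈ Ioo (0 : ℝ) T, w x t ≤ v x t) :
    ∀ x ∈ closedBall (0 : EuclideanSpace ℝ (Fin n)) R, ∀ t ∈ Ico (0 : ℝ) T, w x t ≤ v x t := by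
  intro x hx t ht
  have hK : closedBall 0 R ×ˢ Icc 0 t ⊆ closedBall (0 : EuclideanSpace ℝ (Fin n)) R ×ˢ Ico 0 T :=
    prod_mono_right fun s hs => ⟨hs.1, hs.2.trans_lt ht.2⟩
  obtain ⟨⟨x₀, t₀⟩, ⟨hx₀, ht₀0, ht₀t⟩, hmax⟩ :=
    ((isCompact_closedBall (0 : EuclideanSpace ℝ (Fin n)) R).prod isCompact_Icc).exists_isMaxOn
      ⟨(x, t), hx, ht.1, le_rfl⟩ ((hw_cont.sub hv_cont).mono hK)
  have hmax' : ∀ y ∈ closedBall 0 R, ∀ s ∈ Icc 0 t, w y s - v y s ≤ w x₀ t₀ - v x₀ t₀ :=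
    fun y hy s hs => isMaxOn_iff.1 hmax (y, s) ⟨hy, hs⟩
  suffices w x₀ t₀ ≤ v x₀ t₀ by linarith [hmax' x hx t ⟨ht.1, le_rfl⟩]
  by_contra! hpos
  have ht₀ : t₀ ∈ Ioo 0 T := by
    refine ⟨lt_of_le_of_ne ht₀0 ?_, ht₀t.trans_lt ht.2⟩
    rintro rfl
    exact hpos.not_ge (h_init x₀ hx₀)
  have hx₀' : x₀ ∈ ball 0 R := by
    refine mem_ball_zero_iff.2 (lt_of_le_of_ne (mem_closedBall_zero_iff.1 hx₀) fun hR => ?_)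
    exact hpos.not_ge (h_bdry x₀ (mem_sphere_zero_iff_norm.2 hR) t₀ ht₀)
  have hlap : lap n (fun y => w y t₀) x₀ ≤ lap n (fun y => v y t₀) x₀ := by
    have hloc : IsLocalMax ((fun y => w y t₀) - fun y => v y t₀) x₀ := by
      filter_upwards [isOpen_ball.mem_nhds hx₀'] with y hy
      exact hmax' y (ball_subset_closedBall hy) t₀ ⟨ht₀0, ht₀t⟩
    have := hloc.lap_nonpos ((hw_x t₀ ht₀).sub (hv_x t₀ ht₀)) isOpen_ball hx₀'
    rw [lap_sub (hw_x t₀ ht₀) (hv_x t₀ ht₀) isOpen_ball hx₀'] at this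
    linarith
  have htime : deriv (v x₀) t₀ ≤ deriv (w x₀) t₀ := by
    have := ((hw_t x₀ hx₀' t₀ ht₀).hasDerivAt.sub
      (hv_t x₀ hx₀' t₀ ht₀).hasDerivAt).nonneg_of_eventually_le_nhdsLT ?_
    · linarith
    filter_upwards [Ioo_mem_nhdsLT ht₀.1] with s hs
    exact hmax' x₀ hx₀ s ⟨hs.1.le, hs.2.le.trans ht₀t⟩
  linarith [hw_sub x₀ hx₀' t₀ ht₀, hv_super x₀ hx₀' t₀ ht₀]

section BarrierProfile

variable {A m R κ : ℝ}

theorem hasDerivAt_barrierProfile (hκ : 0 < κ) (r : ℝ) :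
    HasDerivAt (fun r => A * ((R ^ 2 - r) ^ 2 + κ) ^ (-m))
      (2 * A * m * (R ^ 2 - r) * ((R ^ 2 - r) ^ 2 + κ) ^ (-m - 1)) r := by
  have hbase : HasDerivAt (fun r => (R ^ 2 - r) ^ 2 + κ) (-(2 * (R ^ 2 - r))) r := by
    simpa using (((hasDerivAt_id r).const_sub (R ^ 2)).pow 2).add_const κ
  refine ((hbase.rpow_const (p := -m) (Or.inl (by positivity))).const_mul A).congr_deriv ?_
  ring_nf

theorem hasDerivAt_barrierProfile_deriv (hκ : 0 < κ) (r : ℝ) :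
    HasDerivAt (fun r => 2 * A * m * (R ^ 2 - r) * ((R ^ 2 - r) ^ 2 + κ) ^ (-m - 1))
      (2 * A * m * (2 * (m + 1) * (R ^ 2 - r) ^ 2 * ((R ^ 2 - r) ^ 2 + κ) ^ (-m - 2)
        - ((R ^ 2 - r) ^ 2 + κ) ^ (-m - 1))) r := by
  have hbase : HasDerivAt (fun r => (R ^ 2 - r) ^ 2 + κ) (-(2 * (R ^ 2 - r))) r := by
    simpa using (((hasDerivAt_id r).const_sub (R ^ 2)).pow 2).add_const κ
  refine ((((hasDerivAt_id r).const_sub (R ^ 2)).const_mul (2 * A * m)).mul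
    (hbase.rpow_const (p := -m - 1) (Or.inl (by positivity)))).congr_deriv ?_
  rw [show -m - 1 - 1 = -m - 2 by ring, id]
  ring

end BarrierProfile

section HeatBarrier

variable {n : ℕ} {A m R T β : ℝ} {x : EuclideanSpace ℝ (Fin n)} {t : ℝ}

def heatBarrier (A m R T β : ℝ) (x : EuclideanSpace ℝ (Fin n)) (t : ℝ) : ℝ :=
  A * ((R ^ 2 - ‖x‖ ^ 2) ^ 2 + β * (T - t)) ^ (-m)

theorem hasDerivAt_heatBarrier (hβ : 0 < β) (ht : t < T) :
    HasDerivAt (heatBarrier A m R T β x)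
      (A * m * β * ((R ^ 2 - ‖x‖ ^ 2) ^ 2 + β * (T - t)) ^ (-m - 1)) t := by
  have hbase : HasDerivAt (fun s => (R ^ 2 - ‖x‖ ^ 2) ^ 2 + β * (T - s)) (-β) t := by
    simpa using (((hasDerivAt_id t).const_sub T).const_mul β).const_add ((R ^ 2 - ‖x‖ ^ 2) ^ 2)
  have hpos : 0 < (R ^ 2 - ‖x‖ ^ 2) ^ 2 + β * (T - t) := by
    have := mul_pos hβ (sub_pos.2 ht)
    positivity
  refine ((hbase.rpow_const (p := -m) (Or.inl hpos.ne')).const_mul A).congr_deriv ?_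
  ring

theorem lap_heatBarrier (hβ : 0 < β) (ht : t < T) :
    lap n (fun y => heatBarrier A m R T β y t) x
      = 4 * ‖x‖ ^ 2 * (2 * A * m * (2 * (m + 1) * (R ^ 2 - ‖x‖ ^ 2) ^ 2
          * ((R ^ 2 - ‖x‖ ^ 2) ^ 2 + β * (T - t)) ^ (-m - 2)
          - ((R ^ 2 - ‖x‖ ^ 2) ^ 2 + β * (T - t)) ^ (-m - 1)))
        + 2 * n * (2 * A * m * (R ^ 2 - ‖x‖ ^ 2)
          * ((R ^ 2 - ‖x‖ ^ 2) ^ 2 + β * (T - t)) ^ (-m - 1)) :=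
  have hκ : 0 < β * (T - t) := mul_pos hβ (sub_pos.2 ht)
  lap_comp_norm_sq (φ := fun r => A * ((R ^ 2 - r) ^ 2 + β * (T - t)) ^ (-m))
    (hasDerivAt_barrierProfile hκ) (hasDerivAt_barrierProfile_deriv hκ _)

theorem lap_heatBarrier_lt_deriv (hA : 0 < A) (hm : 0 < m) (hx : ‖x‖ ≤ R) (ht : t < T)
    (hβ : (16 * (m + 1) + 4 * n) * R ^ 2 < β) :
    lap n (fun y => heatBarrier A m R T β y t) x < deriv (heatBarrier A m R T β x) t := by
  have hβ0 : 0 < β := lt_of_le_of_lt (by positivity) hβ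
  rw [lap_heatBarrier hβ0 ht, (hasDerivAt_heatBarrier hβ0 ht).deriv]
  set c := R ^ 2 - ‖x‖ ^ 2
  set ρ := c ^ 2 + β * (T - t)
  have hc : 0 ≤ c := sub_nonneg.2 (pow_le_pow_left₀ (norm_nonneg x) hx 2)
  have hcR : c ≤ R ^ 2 := sub_le_self _ (by positivity)
  have hρ : 0 < ρ := by have := mul_pos hβ0 (sub_pos.2 ht); positivity
  have hcρ : c ^ 2 ≤ ρ := le_add_of_nonneg_right (mul_pos hβ0 (sub_pos.2 ht)).le
  have hX : 0 < A * m * ρ ^ (-m - 2) := by positivity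
  have hρX : ρ ^ (-m - 1) = ρ * ρ ^ (-m - 2) := by
    rw [show -m - 1 = 1 + (-m - 2) by ring, rpow_add hρ, rpow_one]
  rw [hρX]
  -- the claim divided by `A m ρ^{-m-2} > 0`
  have key : 16 * (m + 1) * ‖x‖ ^ 2 * c ^ 2 - 8 * ‖x‖ ^ 2 * ρ + 4 * n * c * ρ < β * ρ := by
    have h1 : ‖x‖ ^ 2 * c ^ 2 ≤ R ^ 2 * ρ :=
      mul_le_mul (by linarith) hcρ (sq_nonneg c) (by positivity)
    have h2 : (n : ℝ) * c * ρ ≤ n * R ^ 2 * ρ := by gcongr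
    nlinarith [mul_lt_mul_of_pos_right hβ hρ]
  nlinarith [mul_lt_mul_of_pos_left key hX]

theorem contDiff_heatBarrier (hβ : 0 < β) (ht : t < T) :
    ContDiff ℝ 2 (fun y : EuclideanSpace ℝ (Fin n) => heatBarrier A m R T β y t) := by
  have hκ : 0 < β * (T - t) := mul_pos hβ (sub_pos.2 ht)
  refine contDiff_const.mul (ContDiff.rpow_const_of_ne ?_ fun y => by positivity)
  exact ((contDiff_const.sub (contDiff_norm_sq ℝ)).pow 2).add contDiff_const

theorem continuousOn_heatBarrier (hβ : 0 < β) :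
    ContinuousOn (fun z : EuclideanSpace ℝ (Fin n) × ℝ => heatBarrier A m R T β z.1 z.2)
      {z | z.2 < T} := by
  refine continuousOn_const.mul (ContinuousOn.rpow_const ?_ fun z hz => Or.inl ?_)
  · exact (((continuous_const.sub ((continuous_norm.comp continuous_fst).pow 2)).pow 2).add
      (continuous_const.mul (continuous_const.sub continuous_snd))).continuousOn
  · have := mul_pos hβ (sub_pos.2 (show z.2 < T from hz))
    positivity

theorem le_heatBarrier_of_norm_eq {C : ℝ} (hx : ‖x‖ = R) (hβ : 0 < β) (ht : t < T)
    (hCA : C * β ^ m ≤ A) : C * (T - t) ^ (-m) ≤ heatBarrier A m R T β x t := by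
  have hCA' : C ≤ A * β ^ (-m) := by
    rwa [rpow_neg hβ.le, ← div_eq_mul_inv, le_div_iff₀ (rpow_pos_of_pos hβ m)]
  rw [heatBarrier, hx, sub_self, zero_pow two_ne_zero, zero_add,
    mul_rpow hβ.le (sub_pos.2 ht).le, ← mul_assoc]
  exact mul_le_mul_of_nonneg_right hCA' (rpow_nonneg (sub_pos.2 ht).le _)

theorem le_heatBarrier_zero {M : ℝ} (hA : 0 ≤ A) (hm : 0 ≤ m) (hx : ‖x‖ ≤ R) (hβ : 0 < β)
    (hT : 0 < T) (hMA : M * (R ^ 4 + β * T) ^ m ≤ A) : M ≤ heatBarrier A m R T β x 0 := by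
  have hpos : 0 < R ^ 4 + β * T := by have := mul_pos hβ hT; positivity
  have hMA' : M ≤ A * (R ^ 4 + β * T) ^ (-m) := by
    rwa [rpow_neg hpos.le, ← div_eq_mul_inv, le_div_iff₀ (rpow_pos_of_pos hpos m)]
  have hbase : (R ^ 2 - ‖x‖ ^ 2) ^ 2 + β * (T - 0) ≤ R ^ 4 + β * T := by
    nlinarith [sq_nonneg ‖x‖, pow_le_pow_left₀ (norm_nonneg x) hx 2]
  refine hMA'.trans (mul_le_mul_of_nonneg_left ?_ hA)
  exact rpow_le_rpow_of_nonpos (by have := mul_pos hβ hT; positivity) hbase (neg_nonpos.2 hm)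

theorem heatBarrier_le_of_norm_le {a : ℝ} (hA : 0 ≤ A) (hm : 0 ≤ m) (hx : ‖x‖ ≤ a) (ha : a < R)
    (hβ : 0 ≤ β) (ht : t ≤ T) : heatBarrier A m R T β x t ≤ A * (R ^ 2 - a ^ 2) ^ (-(2 * m)) := by
  have ha0 : 0 ≤ a := (norm_nonneg x).trans hx
  have hgap : 0 < R ^ 2 - a ^ 2 := by nlinarith
  have hbase : (R ^ 2 - a ^ 2) ^ 2 ≤ (R ^ 2 - ‖x‖ ^ 2) ^ 2 + β * (T - t) := by
    have : R ^ 2 - a ^ 2 ≤ R ^ 2 - ‖x‖ ^ 2 := by nlinarith [norm_nonneg x]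
    nlinarith [mul_nonneg hβ (sub_nonneg.2 ht)]
  rw [heatBarrier, show -(2 * m) = (2 : ℕ) * -m by push_cast; ring, rpow_mul hgap.le,
    rpow_natCast]
  exact mul_le_mul_of_nonneg_left
    (rpow_le_rpow_of_nonpos (by positivity) hbase (neg_nonpos.2 hm)) hA

end HeatBarrier

theorem heat_no_interior_blowup_of_boundary_bound_general
    (n : ℕ) (R T C m : ℝ) (hT : 0 < T) (hC : 0 < C) (hm : 0 < m)
    (w : EuclideanSpace ℝ (Fin n) → ℝ → ℝ)
    (hw_cont : ContinuousOn (fun z : EuclideanSpace ℝ (Fin n) × ℝ => w z.1 z.2)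
      (closedBall 0 R ×ˢ Ico 0 T))
    (hw_x : ∀ t ∈ Ioo (0 : ℝ) T, ContDiffOn ℝ 2 (fun x => w x t) (ball 0 R))
    (hw_t : ∀ x ∈ ball (0 : EuclideanSpace ℝ (Fin n)) R, ∀ t ∈ Ioo (0 : ℝ) T,
      DifferentiableAt ℝ (w x) t)
    (hw_heat : ∀ x ∈ ball (0 : EuclideanSpace ℝ (Fin n)) R, ∀ t ∈ Ioo (0 : ℝ) T,
      deriv (w x) t = lap n (fun y => w y t) x)
    (hw_bd : ∀ x ∈ sphere (0 : EuclideanSpace ℝ (Fin n)) R, ∀ t ∈ Ioo (0 : ℝ) T,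
      w x t ≤ C * (T - t) ^ (-m)) :
    ∀ a : ℝ, 0 < a → a < R →
      ∃ C₁ > 0, (∀ x : EuclideanSpace ℝ (Fin n), ‖x‖ ≤ a → ∀ t ∈ Ico (0 : ℝ) T,
        w x t ≤ C₁ * (R ^ 2 - a ^ 2) ^ (-(2 * m))) ∧
      BddAbove {y : ℝ | ∃ x : EuclideanSpace ℝ (Fin n), ∃ t ∈ Ico (0 : ℝ) T,
        ‖x‖ ≤ a ∧ y = w x t} := by
  intro a _ haR
  set β := (16 * (m + 1) + 4 * n) * R ^ 2 + 1
  have hβ : 0 < β := by positivity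
  have hw₀ : ContinuousOn (fun x => w x 0) (closedBall 0 R) :=
    hw_cont.comp (continuous_id.prodMk continuous_const).continuousOn fun x hx => ⟨hx, le_rfl, hT⟩
  obtain ⟨M, hM⟩ := (isCompact_closedBall (0 : EuclideanSpace ℝ (Fin n)) R).bddAbove_image hw₀
  set A := max (C * β ^ m) (M * (R ^ 4 + β * T) ^ m)
  have hA : 0 < A := lt_max_of_lt_left (by positivity)
  have hcomp := heat_comparison_of_strictSupersolution (v := heatBarrier A m R T β) hw_cont
    ((continuousOn_heatBarrier hβ).mono fun z hz => hz.2.2) hw_x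
    (fun t ht => (contDiff_heatBarrier hβ ht.2).contDiffOn) hw_t
    (fun x _ t ht => (hasDerivAt_heatBarrier hβ ht.2).differentiableAt)
    (fun x hx t ht => (hw_heat x hx t ht).le)
    (fun x hx t ht =>
      lap_heatBarrier_lt_deriv hA hm (mem_ball_zero_iff.1 hx).le ht.2 (lt_add_one _))
    (fun x hx => (hM ⟨x, hx, rfl⟩).trans <| le_heatBarrier_zero hA.le hm.le
      (mem_closedBall_zero_iff.1 hx) hβ hT (le_max_right _ _))
    (fun x hx t ht => (hw_bd x hx t ht).trans <| le_heatBarrier_of_norm_eq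
      (mem_sphere_zero_iff_norm.1 hx) hβ ht.2 (le_max_left _ _))
  have hbound : ∀ x : EuclideanSpace ℝ (Fin n), ‖x‖ ≤ a → ∀ t ∈ Ico (0 : ℝ) T,
      w x t ≤ A * (R ^ 2 - a ^ 2) ^ (-(2 * m)) := fun x hx t ht =>
    (hcomp x (mem_closedBall_zero_iff.2 (hx.trans haR.le)) t ht).trans <|
      heatBarrier_le_of_norm_le hA.le hm.le hx haR hβ.le ht.2.le
  refine ⟨A, hA, hbound, A * (R ^ 2 - a ^ 2) ^ (-(2 * m)), ?_⟩
  rintro y ⟨x, t, ht, hx, rfl⟩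
  exact hbound x hx t ht

/-- Let `w` be continuous on `B̄_R × [0,T)`, satisfy the heat equation
in `B_R × (0,T)`, and satisfy `w(x,t) ≤ C (T-t)^{-m}` on `S_R × (0,T)` with `C, m > 0`.
Then for every `0 < a < R`, `w` is bounded above on `{|x| ≤ a} × [0,T)`, by
`C₁ (R² - a²)^{-2m}` for some constant `C₁ > 0`. -/
theorem heat_no_interior_blowup_of_boundary_bound
    (n : ℕ) (R T C m : ℝ) (hn : 0 < n) (hR : 0 < R) (hT : 0 < T) (hC : 0 < C) (hm : 0 < m)
    (w : EuclideanSpace ℝ (Fin n) → ℝ → ℝ)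
    (hw_cont : ContinuousOn (fun z : EuclideanSpace ℝ (Fin n) × ℝ => w z.1 z.2)
      (closedBall 0 R ×ˢ Ico 0 T))
    (hw_x : ∀ t ∈ Ioo (0 : ℝ) T, ContDiffOn ℝ 2 (fun x => w x t) (ball 0 R))
    (hw_t : ∀ x ∈ ball (0 : EuclideanSpace ℝ (Fin n)) R, ∀ t ∈ Ioo (0 : ℝ) T,
      DifferentiableAt ℝ (w x) t)
    (hw_heat : ∀ x ∈ ball (0 : EuclideanSpace ℝ (Fin n)) R, ∀ t ∈ Ioo (0 : ℝ) T,
      deriv (w x) t = lap n (fun y => w y t) x)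
    (hw_bd : ∀ x ∈ sphere (0 : EuclideanSpace ℝ (Fin n)) R, ∀ t ∈ Ioo (0 : ℝ) T,
      w x t ≤ C * (T - t) ^ (-m)) :
    ∀ a : ℝ, 0 < a → a < R →
      ∃ C₁ > 0, (∀ x : EuclideanSpace ℝ (Fin n), ‖x‖ ≤ a → ∀ t ∈ Ico (0 : ℝ) T,
        w x t ≤ C₁ * (R ^ 2 - a ^ 2) ^ (-(2 * m))) ∧
      BddAbove {y : ℝ | ∃ x : EuclideanSpace ℝ (Fin n), ∃ t ∈ Ico (0 : ℝ) T,
        ‖x‖ ≤ a ∧ y = w x t} :=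
  heat_no_interior_blowup_of_boundary_bound_general n R T C m hT hC hm w hw_cont hw_x hw_t hw_heat
    hw_bd
end
end

section
/- Let R > 0, T > 0, m > 0, C₁ > 0, and C₂ ≥ 4nR² + 16R²(m+1). Define h(x) = (R² − |x|²)² and z(x,t) = C₁ [h(x) + C₂(T−t)]^{−m} for (x,t) ∈ B_R × (0,T). Then z is a supersolution of the heat equation: z_t(x,t) − Δz(x,t) ≥ 0 for all (x,t) ∈ B_R × (0,T). -/
open MeasureTheory Metric Real Set Filter
open scoped Topology

noncomputable section

/-! `z(x, t) = g(|x|²)` for the profile `g(s) = C₁ ((R² - s)² + C₂(T - t))^{-m}`, so the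
Laplacian of a radial function `g(|x|²)`, namely `2n g'(|x|²) + 4|x|² g''(|x|²)`, reduces
`z_t - Δz` to `C₁ m B^{-m-2}` times a polynomial in `|x|²` and `B = h(x) + C₂(T - t)`.
That polynomial is nonnegative on the ball because `R² - |x|² ≤ R²`, `|x|² ≤ R²` and
`(R² - |x|²)² ≤ B`, which is where the lower bound on `C₂` comes from. -/

theorem lap_comp_norm_sq_s13 {n : ℕ} {g g' : ℝ → ℝ} {g'' : ℝ} {x : EuclideanSpace ℝ (Fin n)}
    (hg : ∀ u, HasDerivAt g (g' u) u) (hg' : HasDerivAt g' g'' (‖x‖ ^ 2)) :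
    lap n (fun y => g (‖y‖ ^ 2)) x = 2 * n * g' (‖x‖ ^ 2) + 4 * ‖x‖ ^ 2 * g'' := by
  have hnormSq : ∀ y : EuclideanSpace ℝ (Fin n),
      HasFDerivAt (fun y => ‖y‖ ^ 2) (2 • innerSL ℝ y) y :=
    fun y => (hasStrictFDerivAt_norm_sq y).hasFDerivAt
  have first_partial : ∀ i, (fun y : EuclideanSpace ℝ (Fin n) =>
      fderiv ℝ (fun y => g (‖y‖ ^ 2)) y (EuclideanSpace.single i 1))
        = fun y => 2 * g' (‖y‖ ^ 2) * y i := by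
    intro i
    funext y
    have h : HasFDerivAt (fun y : EuclideanSpace ℝ (Fin n) => g (‖y‖ ^ 2)) _ y :=
      (hg _).comp_hasFDerivAt (f := fun y => ‖y‖ ^ 2) y (hnormSq y)
    rw [h.fderiv]
    simp only [smul_apply, coe_innerSL_apply, EuclideanSpace.inner_single_right, conj_trivial,
      nsmul_eq_mul]
    ring
  have second_partial : ∀ i, fderiv ℝ (fun y : EuclideanSpace ℝ (Fin n) =>
      2 * g' (‖y‖ ^ 2) * y i) x (EuclideanSpace.single i 1)
        = 2 * g' (‖x‖ ^ 2) + 4 * g'' * x i ^ 2 := by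
    intro i
    have h : HasFDerivAt (fun y : EuclideanSpace ℝ (Fin n) => 2 * g' (‖y‖ ^ 2) * y i) _ x :=
      ((hg'.comp_hasFDerivAt (f := fun y => ‖y‖ ^ 2) x (hnormSq x)).const_mul 2).fun_mul
        (EuclideanSpace.proj i : EuclideanSpace ℝ (Fin n) →L[ℝ] ℝ).hasFDerivAt
    rw [h.fderiv]
    simp only [Function.comp_apply, add_apply, smul_apply, PiLp.proj_apply, PiLp.single_eq_same,
      coe_innerSL_apply, EuclideanSpace.inner_single_right, conj_trivial, nsmul_eq_mul, smul_eq_mul]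
    ring
  simp only [lap, first_partial, second_partial, Finset.sum_add_distrib, Finset.sum_const,
    Finset.card_univ, Fintype.card_fin, nsmul_eq_mul, ← Finset.mul_sum,
    ← EuclideanSpace.real_norm_sq_eq]
  ring

theorem hasDerivAt_sub_sq_add_rpow {a c : ℝ} (p : ℝ) (hc : 0 < c) (s : ℝ) :
    HasDerivAt (fun s => ((a - s) ^ 2 + c) ^ p)
      (-(2 * p * (a - s) * ((a - s) ^ 2 + c) ^ (p - 1))) s := by
  have hB : (a - s) ^ 2 + c ≠ 0 := by positivity
  refine ((((hasDerivAt_id' s).const_sub a).fun_pow 2).add_const c).rpow_const (p := p)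
    (Or.inl hB) |>.congr_deriv ?_
  ring

theorem hasDerivAt_add_mul_sub_rpow {b C T t : ℝ} (p : ℝ) (h : 0 < b + C * (T - t)) :
    HasDerivAt (fun t => (b + C * (T - t)) ^ p) (-(p * C * (b + C * (T - t)) ^ (p - 1))) t := by
  refine ((((hasDerivAt_id' t).const_sub T).const_mul C).const_add b).rpow_const
    (p := p) (Or.inl h.ne') |>.congr_deriv ?_
  ring

section Profile

variable {a c m : ℝ}

theorem hasDerivAt_barrier_profile (C₁ : ℝ) (hc : 0 < c) (s : ℝ) :
    HasDerivAt (fun s => C₁ * ((a - s) ^ 2 + c) ^ (-m))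
      (2 * C₁ * m * (a - s) * ((a - s) ^ 2 + c) ^ (-m - 1)) s := by
  refine (hasDerivAt_sub_sq_add_rpow (-m) hc s).const_mul C₁ |>.congr_deriv ?_
  ring

theorem hasDerivAt_barrier_profile_deriv (C₁ : ℝ) (hc : 0 < c) (s : ℝ) :
    HasDerivAt (fun s => 2 * C₁ * m * (a - s) * ((a - s) ^ 2 + c) ^ (-m - 1))
      (4 * C₁ * m * (m + 1) * (a - s) ^ 2 * ((a - s) ^ 2 + c) ^ (-m - 2)
        - 2 * C₁ * m * ((a - s) ^ 2 + c) ^ (-m - 1)) s := by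
  have h := (((hasDerivAt_id' s).const_sub a).const_mul (2 * C₁ * m)).fun_mul
    (hasDerivAt_sub_sq_add_rpow (a := a) (-m - 1) hc s)
  rw [show (-m - 1 - 1 : ℝ) = -m - 2 by ring] at h
  exact h.congr_deriv (by ring)

end Profile

theorem barrier_polynomial_nonneg {n : ℕ} {a u c m C₂ : ℝ} (hm : -1 ≤ m) (hc : 0 ≤ c)
    (hu : 0 ≤ u) (hua : u ≤ a) (hC₂ : 4 * n * a + 16 * a * (m + 1) ≤ C₂) :
    0 ≤ C₂ * ((a - u) ^ 2 + c) - 4 * n * (a - u) * ((a - u) ^ 2 + c)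
      - 16 * (m + 1) * (a - u) ^ 2 * u + 8 * u * ((a - u) ^ 2 + c) := by
  set B := (a - u) ^ 2 + c
  have hB : 0 ≤ B := by positivity
  have h_lap : n * ((a - u) * B) ≤ n * (a * B) := by gcongr; linarith
  have h_grad : (a - u) ^ 2 * u ≤ B * a := by gcongr; linarith
  have h_time : (4 * n * a + 16 * a * (m + 1)) * B ≤ C₂ * B := by gcongr
  nlinarith [mul_nonneg hu hB]

theorem barrier_heat_defect_nonneg {n : ℕ} {a u c m C₁ C₂ : ℝ} (hm : 0 ≤ m) (hC₁ : 0 ≤ C₁)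
    (hc : 0 < c) (hu : 0 ≤ u) (hua : u ≤ a) (hC₂ : 4 * n * a + 16 * a * (m + 1) ≤ C₂) :
    0 ≤ C₁ * m * C₂ * ((a - u) ^ 2 + c) ^ (-m - 1)
      - (2 * n * (2 * C₁ * m * (a - u) * ((a - u) ^ 2 + c) ^ (-m - 1))
        + 4 * u * (4 * C₁ * m * (m + 1) * (a - u) ^ 2 * ((a - u) ^ 2 + c) ^ (-m - 2)
          - 2 * C₁ * m * ((a - u) ^ 2 + c) ^ (-m - 1))) := by
  set B := (a - u) ^ 2 + c
  have hB : 0 < B := by positivity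
  have hpow : B ^ (-m - 1) = B ^ (-m - 2) * B := by
    rw [← rpow_add_one hB.ne']
    ring_nf
  rw [hpow]
  calc (0 : ℝ) ≤ C₁ * m * B ^ (-m - 2) * (C₂ * B - 4 * n * (a - u) * B
          - 16 * (m + 1) * (a - u) ^ 2 * u + 8 * u * B) :=
        mul_nonneg (by positivity) (barrier_polynomial_nonneg (by linarith) hc.le hu hua hC₂)
    _ = _ := by ring

theorem barrier_function_supersolution_general
    (n : ℕ) (R T m C₁ C₂ : ℝ) (hm : 0 < m) (hC₁ : 0 < C₁)
    (hC₂ : 4 * n * R ^ 2 + 16 * R ^ 2 * (m + 1) ≤ C₂)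
    (z : EuclideanSpace ℝ (Fin n) → ℝ → ℝ)
    (hz : ∀ x t, z x t = C₁ * ((R ^ 2 - ‖x‖ ^ 2) ^ 2 + C₂ * (T - t)) ^ (-m)) :
    ∀ x ∈ ball (0 : EuclideanSpace ℝ (Fin n)) R, ∀ t ∈ Ioo (0 : ℝ) T,
      0 ≤ deriv (z x) t - lap n (fun y => z y t) x := by
  intro x hx t ht
  have hxR : ‖x‖ < R := mem_ball_zero_iff.mp hx
  have hR : 0 < R := (norm_nonneg x).trans_lt hxR
  have hc : 0 < C₂ * (T - t) := mul_pos (by nlinarith) (sub_pos.mpr ht.2)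
  have hzt : HasDerivAt (z x)
      (C₁ * m * C₂ * ((R ^ 2 - ‖x‖ ^ 2) ^ 2 + C₂ * (T - t)) ^ (-m - 1)) t := by
    rw [funext (hz x)]
    exact ((hasDerivAt_add_mul_sub_rpow (-m) (by positivity)).const_mul C₁).congr_deriv
      (by ring)
  rw [hzt.deriv, funext fun y => hz y t, lap_comp_norm_sq_s13 (hasDerivAt_barrier_profile C₁ hc)
    (hasDerivAt_barrier_profile_deriv C₁ hc _)]
  exact barrier_heat_defect_nonneg hm.le hC₁.le hc (sq_nonneg _)
    (pow_le_pow_left₀ (norm_nonneg x) hxR.le 2) hC₂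

/-- For `h(x) = (R² - |x|²)²`,
`z(x,t) = C₁ (h(x) + C₂(T-t))^{-m}` with `C₁ > 0`, `m > 0` and
`C₂ ≥ 4nR² + 16R²(m+1)`, the function `z` is a supersolution of the heat equation on
`B_R × (0,T)`: `z_t - Δz ≥ 0`. -/
theorem barrier_function_supersolution
    (n : ℕ) (R T m C₁ C₂ : ℝ) (hR : 0 < R) (hT : 0 < T) (hm : 0 < m) (hC₁ : 0 < C₁)
    (hC₂ : 4 * n * R ^ 2 + 16 * R ^ 2 * (m + 1) ≤ C₂)
    (z : EuclideanSpace ℝ (Fin n) → ℝ → ℝ)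
    (hz : ∀ x t, z x t = C₁ * ((R ^ 2 - ‖x‖ ^ 2) ^ 2 + C₂ * (T - t)) ^ (-m)) :
    ∀ x ∈ ball (0 : EuclideanSpace ℝ (Fin n)) R, ∀ t ∈ Ioo (0 : ℝ) T,
      0 ≤ deriv (z x) t - lap n (fun y => z y t) x :=
  barrier_function_supersolution_general n R T m C₁ C₂ hm hC₁ hC₂ z hz
end
end
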